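/- arXiv:2405.11377 — 4 statements merged into one kernel-verified Lean document; each statement's English description precedes it below -/
import Mathlib

section
/- Let L ≥ 1, r ≥ 2, let E be a real normed vector space, let S : {1,…,r} → E, and suppose Δ_min² := min_{a ≠ b} ‖S(a) − S(b)‖² > 0. For label vectors c, d : {1,…,L} → {1,…,r} define the classification error rate h(c,d) = min_{π ∈ Π_r} (1/L) Σ_{l=1}^{L} 1{c_l ≠ π(d_l)} and the misclassification loss g(c,d) = min_{π ∈ Π_r} (1/L) Σ_{l=1}^{L} ‖S(c_l) − S(π(d_l))‖², where Π_r is the set of all permutations of {1,…,r}. Then h(c,d) ≤ g(c,d)/Δ_min². -/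
/-! For a fixed permutation, every label it gets wrong costs at least `Δ_min²` in squared
distance between centroids, so its error rate is at most its loss divided by `Δ_min²`; an
inequality holding permutation by permutation survives taking the minimum on both sides. -/

open Finset

lemma sInf_sq_norm_sub_le {ι E : Type*} [SeminormedAddCommGroup E] (S : ι → E) {a b : ι}
    (hab : a ≠ b) :
    sInf {x : ℝ | ∃ a b : ι, a ≠ b ∧ x = ‖S a - S b‖ ^ 2} ≤ ‖S a - S b‖ ^ 2 :=
  csInf_le ⟨0, fun _ ⟨_, _, _, hx⟩ => hx ▸ sq_nonneg _⟩ ⟨a, b, hab, rfl⟩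

section Separated

variable {α ι E : Type*} [DecidableEq α] [Fintype ι] [SeminormedAddCommGroup E] {S : α → E} {Δ : ℝ}

lemma ite_ne_mul_le_sq_norm_sub (hsep : ∀ a b, a ≠ b → Δ ≤ ‖S a - S b‖ ^ 2) (a b : α) :
    (if a ≠ b then (1 : ℝ) else 0) * Δ ≤ ‖S a - S b‖ ^ 2 := by
  split_ifs with hab
  · simpa using hsep a b hab
  · simp

lemma mul_sum_ite_ne_le_div (hsep : ∀ a b, a ≠ b → Δ ≤ ‖S a - S b‖ ^ 2) (hΔ : 0 < Δ)
    {w : ℝ} (hw : 0 ≤ w) (c d : ι → α) :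
    w * ∑ l, (if c l ≠ d l then (1 : ℝ) else 0) ≤ (w * ∑ l, ‖S (c l) - S (d l)‖ ^ 2) / Δ := by
  rw [le_div_iff₀ hΔ, mul_assoc, sum_mul]
  gcongr with l
  exact ite_ne_mul_le_sq_norm_sub hsep _ _

end Separated

lemma inf'_le_inf'_div {β : Type*} {s : Finset β} (hs : s.Nonempty) {f g : β → ℝ} {Δ : ℝ}
    (hΔ : 0 < Δ) (hfg : ∀ i ∈ s, f i ≤ g i / Δ) :
    s.inf' hs f ≤ s.inf' hs g / Δ := by
  rw [le_div_iff₀ hΔ]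
  refine le_inf' hs _ fun i hi => ?_
  calc s.inf' hs f * Δ ≤ f i * Δ := by gcongr; exact inf'_le f hi
    _ ≤ g i := (le_div_iff₀ hΔ).mp (hfg i hi)

theorem classification_error_le_misclassification_loss_div_sep_general
    (L r : ℕ)
    (E : Type*) [NormedAddCommGroup E]
    (S : Fin r → E) (Δ2 : ℝ)
    (hΔ2 : Δ2 = sInf {x : ℝ | ∃ a b : Fin r, a ≠ b ∧ x = ‖S a - S b‖ ^ 2})
    (hΔpos : 0 < Δ2)
    (c d : Fin L → Fin r) :
    (Finset.univ.inf' Finset.univ_nonempty fun π : Equiv.Perm (Fin r) =>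
        (1 / (L : ℝ)) * ∑ l : Fin L, if c l ≠ π (d l) then (1 : ℝ) else 0)
      ≤ (Finset.univ.inf' Finset.univ_nonempty fun π : Equiv.Perm (Fin r) =>
        (1 / (L : ℝ)) * ∑ l : Fin L, ‖S (c l) - S (π (d l))‖ ^ 2) / Δ2 := by
  have hsep : ∀ a b : Fin r, a ≠ b → Δ2 ≤ ‖S a - S b‖ ^ 2 := fun a b hab =>
    hΔ2 ▸ sInf_sq_norm_sub_le S hab
  exact inf'_le_inf'_div _ hΔpos fun π _ =>
    mul_sum_ite_ne_le_div hsep hΔpos (by positivity : (0 : ℝ) ≤ 1 / L) c (π ∘ d)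

/-- Relation between the classification error rate `h(c,d)` and the
misclassification loss `g(c,d)`: `h(c,d) ≤ g(c,d) / Δ_min²`, where `Δ_min²` is the minimal
squared separation between distinct centroids `S a`, `S b`. -/
theorem classification_error_le_misclassification_loss_div_sep
    (L r : ℕ) (hL : 1 ≤ L) (hr : 2 ≤ r)
    (E : Type*) [NormedAddCommGroup E] [NormedSpace ℝ E]
    (S : Fin r → E) (Δ2 : ℝ)
    (hΔ2 : Δ2 = sInf {x : ℝ | ∃ a b : Fin r, a ≠ b ∧ x = ‖S a - S b‖ ^ 2})
    (hΔpos : 0 < Δ2)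
    (c d : Fin L → Fin r) :
    (Finset.univ.inf' Finset.univ_nonempty fun π : Equiv.Perm (Fin r) =>
        (1 / (L : ℝ)) * ∑ l : Fin L, if c l ≠ π (d l) then (1 : ℝ) else 0)
      ≤ (Finset.univ.inf' Finset.univ_nonempty fun π : Equiv.Perm (Fin r) =>
        (1 / (L : ℝ)) * ∑ l : Fin L, ‖S (c l) - S (π (d l))‖ ^ 2) / Δ2 :=
  classification_error_le_misclassification_loss_div_sep_general L r E S Δ2 hΔ2 hΔpos c d
end

section
/- Let B be an r×r real matrix with nonnegative entries such that every column of B sums to 1, i.e., Σ_{b'} B_{b'b} = 1 for each b. Then the Frobenius norm of I − B satisfies ‖I − B‖_F ≤ √2 · Σ_{b=1}^{r} (1 − B_{bb}). -/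
/-! Column `j` of `I − B` has diagonal entry `1 − B j j` and off-diagonal entries `−B i j`,
which are nonpositive and sum to `−(1 − B j j)`. For nonnegative reals the sum of squares is
at most the square of the sum, so the column has squared norm at most `2 (1 − B j j)²`;
summing over `j` and applying the same inequality to the deficits `1 − B j j` gives
`‖I − B‖_F² ≤ 2 (Σ_j (1 − B j j))²`. -/

open Finset

section ProbabilityVector

variable {ι : Type*} [Fintype ι] {c : ι → ℝ}

lemma le_one_of_nonneg_of_sum_eq_one (hc : ∀ i, 0 ≤ c i) (hsum : ∑ i, c i = 1) (j : ι) :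
    c j ≤ 1 :=
  hsum ▸ single_le_sum (fun i _ ↦ hc i) (mem_univ j)

lemma sum_sq_ite_sub_le_of_sum_eq_one [DecidableEq ι] (hc : ∀ i, 0 ≤ c i)
    (hsum : ∑ i, c i = 1) (j : ι) :
    ∑ i, ((if i = j then (1 : ℝ) else 0) - c i) ^ 2 ≤ 2 * (1 - c j) ^ 2 := by
  have hoff_sum : ∑ i ∈ univ.erase j, c i = 1 - c j := by
    rw [← hsum, ← add_sum_erase univ c (mem_univ j), add_sub_cancel_left]
  have hoff_sq : ∑ i ∈ univ.erase j, ((if i = j then (1 : ℝ) else 0) - c i) ^ 2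
      = ∑ i ∈ univ.erase j, c i ^ 2 :=
    sum_congr rfl fun i hi ↦ by rw [if_neg (ne_of_mem_erase hi), zero_sub, neg_sq]
  have hoff_le : ∑ i ∈ univ.erase j, c i ^ 2 ≤ (1 - c j) ^ 2 :=
    hoff_sum ▸ sum_sq_le_sq_sum_of_nonneg fun i _ ↦ hc i
  rw [← add_sum_erase _ _ (mem_univ j), if_pos rfl, hoff_sq]
  linarith

end ProbabilityVector

/-- If `B` is an `r×r` nonnegative matrix whose columns sum to `1`, then
the Frobenius norm of `I − B` satisfies `‖I − B‖_F ≤ √2 · Σ_b (1 − B_{bb})`. -/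
theorem frobenius_one_sub_column_stochastic_le
    (r : ℕ) (B : Matrix (Fin r) (Fin r) ℝ)
    (hpos : ∀ i j, 0 ≤ B i j)
    (hcol : ∀ b, ∑ b', B b' b = 1) :
    Real.sqrt (∑ i, ∑ j, ((if i = j then (1 : ℝ) else 0) - B i j) ^ 2)
      ≤ Real.sqrt 2 * ∑ b, (1 - B b b) := by
  have hdeficit : ∀ b, 0 ≤ 1 - B b b := fun b ↦
    sub_nonneg.mpr (le_one_of_nonneg_of_sum_eq_one (hpos · b) (hcol b) b)
  have hsq : ∑ i, ∑ j, ((if i = j then (1 : ℝ) else 0) - B i j) ^ 2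
      ≤ 2 * (∑ b, (1 - B b b)) ^ 2 :=
    calc ∑ i, ∑ j, ((if i = j then (1 : ℝ) else 0) - B i j) ^ 2
        = ∑ j, ∑ i, ((if i = j then (1 : ℝ) else 0) - B i j) ^ 2 := sum_comm
      _ ≤ ∑ j, 2 * (1 - B j j) ^ 2 :=
          sum_le_sum fun j _ ↦ sum_sq_ite_sub_le_of_sum_eq_one (hpos · j) (hcol j) j
      _ = 2 * ∑ j, (1 - B j j) ^ 2 := (mul_sum ..).symm
      _ ≤ 2 * (∑ b, (1 - B b b)) ^ 2 := by
          gcongr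
          exact sum_sq_le_sq_sum_of_nonneg fun b _ ↦ hdeficit b
  calc Real.sqrt (∑ i, ∑ j, ((if i = j then (1 : ℝ) else 0) - B i j) ^ 2)
      ≤ Real.sqrt (2 * (∑ b, (1 - B b b)) ^ 2) := Real.sqrt_le_sqrt hsq
    _ = Real.sqrt 2 * ∑ b, (1 - B b b) := by
        rw [Real.sqrt_mul zero_le_two, Real.sqrt_sq (sum_nonneg fun b _ ↦ hdeficit b)]
end

section
/- Let z, ẑ : {1,…,L} → {1,…,r} be two label vectors, let M be the membership matrix of z, and suppose every class of ẑ is nonempty with sizes n̂_b = #{l : ẑ_l = b}; let Ŵ be the normalized membership matrix of ẑ. Then ‖I − MᵀŴ‖_F ≤ √2 · (min_{b} n̂_b)^{-1} · #{l : z_l ≠ ẑ_l}. -/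
/-!
Writing `E a b` for the matrix unit, `Mᵀ Ŵ = ∑ₗ E (z l) (ẑ l) / n̂ (ẑ l)`, while the same sum with
`z` replaced by `ẑ` is the identity, because every class of `ẑ` is nonempty and its rows carry
weights `1 / n̂ b` summing to `1`. Hence `I - Mᵀ Ŵ = ∑ₗ (E (ẑ l) (ẑ l) - E (z l) (ẑ l)) / n̂ (ẑ l)`:
the terms with `z l = ẑ l` vanish and each remaining one has Frobenius norm
`√2 / n̂ (ẑ l) ≤ √2 / min n̂`, so the triangle inequality gives the bound.
-/

open Finset
open scoped Matrix.Norms.Frobenius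

namespace Matrix

variable {ι κ : Type*} [Fintype ι] [DecidableEq κ]

def membership (z : ι → κ) : Matrix ι κ ℝ :=
  of fun l b => if z l = b then 1 else 0

noncomputable def normalizedMembership (z : ι → κ) : Matrix ι κ ℝ :=
  of fun l b => (if z l = b then 1 else 0) / (#{l' | z l' = b} : ℝ)

lemma frobenius_norm_eq_sqrt {m n : Type*} [Fintype m] [Fintype n] (A : Matrix m n ℝ) :
    ‖A‖ = √(∑ i, ∑ j, A i j ^ 2) := by
  simp [frobenius_norm_def, Real.sqrt_eq_rpow]

lemma frobenius_norm_single_sub_single {m n : Type*} [Fintype m] [Fintype n] [DecidableEq m]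
    [DecidableEq n] {i i' : m} (h : i ≠ i') (j : n) (x : ℝ) :
    ‖single i j x - single i' j x‖ = √2 * |x| := by
  rw [frobenius_norm_eq_sqrt, ← Real.sqrt_sq_eq_abs, ← Real.sqrt_mul zero_le_two]
  congr 1
  rw [sum_comm, Fintype.sum_eq_single j fun b hb => by simp [Ne.symm hb],
    Fintype.sum_eq_add i i' h fun a ha => by simp [Ne.symm ha.1, Ne.symm ha.2]]
  simp only [sub_apply, single_apply_same, single_apply_of_ne, h, h.symm, and_true,
    not_false_eq_true, sub_zero, zero_sub, even_two, Even.neg_pow]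
  ring

lemma transpose_membership_mul_normalizedMembership (z zhat : ι → κ) :
    (membership z)ᵀ * normalizedMembership zhat =
      ∑ l, single (z l) (zhat l) ((#{l' | zhat l' = zhat l} : ℝ)⁻¹) := by
  ext a b
  simp only [membership, normalizedMembership, mul_apply, sum_apply, single_apply,
    transpose_apply, of_apply]
  refine sum_congr rfl fun l _ => ?_
  by_cases ha : z l = a <;> by_cases hb : zhat l = b <;> simp [ha, hb]

lemma sum_single_inv_card_eq_one (zhat : ι → κ) (hz : Function.Surjective zhat) :
    ∑ l, single (zhat l) (zhat l) ((#{l' | zhat l' = zhat l} : ℝ)⁻¹) = 1 := by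
  ext a b
  simp only [sum_apply, single_apply, one_apply]
  split_ifs with hab
  · subst hab
    have hcard : (#{l | zhat l = a} : ℝ) ≠ 0 := by
      obtain ⟨l, rfl⟩ := hz a
      exact_mod_cast (card_pos.2 ⟨l, by simp⟩).ne'
    simp_rw [and_self]
    rw [← sum_filter, sum_congr rfl fun l hl => by rw [(mem_filter.1 hl).2], sum_const,
      nsmul_eq_mul, mul_inv_cancel₀ hcard]
  · exact sum_eq_zero fun l _ => if_neg fun h => hab (h.1.symm.trans h.2)

lemma frobenius_norm_one_sub_transpose_membership_mul_le [Fintype κ] (z zhat : ι → κ) {m : ℕ}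
    (hm : 0 < m) (hle : ∀ b, m ≤ #{l | zhat l = b}) :
    ‖1 - (membership z)ᵀ * normalizedMembership zhat‖ ≤ √2 * (m : ℝ)⁻¹ * #{l | z l ≠ zhat l} := by
  have hz : Function.Surjective zhat := fun b => by
    obtain ⟨l, hl⟩ := card_pos.1 (hm.trans_le (hle b))
    exact ⟨l, (mem_filter.1 hl).2⟩
  set x : ι → ℝ := fun l => (#{l' | zhat l' = zhat l} : ℝ)⁻¹
  have hdecomp : 1 - (membership z)ᵀ * normalizedMembership zhat =
      ∑ l, (single (zhat l) (zhat l) (x l) - single (z l) (zhat l) (x l)) := by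
    rw [transpose_membership_mul_normalizedMembership, ← sum_single_inv_card_eq_one zhat hz,
      sum_sub_distrib]
  have hterm : ∀ l, ‖single (zhat l) (zhat l) (x l) - single (z l) (zhat l) (x l)‖ ≤
      if z l ≠ zhat l then √2 * (m : ℝ)⁻¹ else 0 := by
    intro l
    split_ifs with h
    · rw [frobenius_norm_single_sub_single (Ne.symm h), abs_of_nonneg (by positivity)]
      gcongr
      exact inv_anti₀ (by exact_mod_cast hm) (by exact_mod_cast hle (zhat l))
    · simp [not_not.1 h]
  calc ‖1 - (membership z)ᵀ * normalizedMembership zhat‖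
      ≤ ∑ l, ‖single (zhat l) (zhat l) (x l) - single (z l) (zhat l) (x l)‖ :=
        hdecomp ▸ norm_sum_le _ _
    _ ≤ ∑ l, if z l ≠ zhat l then √2 * (m : ℝ)⁻¹ else 0 := sum_le_sum fun l _ => hterm l
    _ = √2 * (m : ℝ)⁻¹ * #{l | z l ≠ zhat l} := by
        rw [← sum_filter, sum_const, nsmul_eq_mul, mul_comm]

end Matrix

/-- For two label vectors `z`, `ẑ` with membership matrix `M` of `z` and
normalized membership matrix `Ŵ` of `ẑ` (all classes of `ẑ` nonempty),
`‖I − Mᵀ Ŵ‖_F ≤ √2 · (min_b n̂_b)⁻¹ · #{l : z_l ≠ ẑ_l}`. -/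
theorem frobenius_one_sub_transpose_membership_mul_normalized_le
    (L r : ℕ) (hr : 0 < r) (z zhat : Fin L → Fin r)
    (M : Matrix (Fin L) (Fin r) ℝ)
    (hM : ∀ l b, M l b = if z l = b then 1 else 0)
    (nhat : Fin r → ℕ)
    (hn : ∀ b, nhat b = (Finset.univ.filter fun l => zhat l = b).card)
    (hpos : ∀ b, 0 < nhat b)
    (What : Matrix (Fin L) (Fin r) ℝ)
    (hW : ∀ l b, What l b = (if zhat l = b then 1 else 0) / (nhat b : ℝ)) :
    Real.sqrt (∑ i, ∑ j, ((if i = j then (1 : ℝ) else 0) - (M.transpose * What) i j) ^ 2)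
      ≤ Real.sqrt 2
          * ((Finset.univ.inf' ⟨⟨0, hr⟩, Finset.mem_univ _⟩ fun b => nhat b : ℕ) : ℝ)⁻¹
          * ((Finset.univ.filter fun l => z l ≠ zhat l).card : ℝ) := by
  obtain rfl : M = Matrix.membership z := Matrix.ext hM
  obtain rfl : nhat = fun b => #{l | zhat l = b} := funext hn
  obtain rfl : What = Matrix.normalizedMembership zhat := Matrix.ext hW
  have h := Matrix.frobenius_norm_one_sub_transpose_membership_mul_le z zhat
    (m := univ.inf' ⟨⟨0, hr⟩, mem_univ _⟩ fun b => #{l | zhat l = b})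
    ((lt_inf'_iff _).2 fun b _ => hpos b) fun b => inf'_le _ (mem_univ b)
  simpa only [Matrix.frobenius_norm_eq_sqrt, Matrix.sub_apply, Matrix.one_apply] using h
end

section
/- Let σ > 0, α ≥ 0, and let f(θ) = exp(θ/σ)/(1 + exp(θ/σ)) be the logistic link with scale σ. Then the convexity constant γ_α := inf_{|θ| ≤ α} min( (f′(θ))²/f(θ)² − f″(θ)/f(θ), f″(θ)/(1 − f(θ)) + (f′(θ))²/(1 − f(θ))² ) equals f(α)(1 − f(α))/σ² = exp(α/σ)/(σ²(1 + exp(α/σ))²). -/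
/-!
Writing `f θ = sigmoid (θ / σ)`, the link solves the logistic equation `f' = f (1 - f) / σ`, so
`f'' = f' (1 - 2 f) / σ`, and substituting both into either expression of `γ_α` collapses it to
`f (1 - f) / σ²`. The function `p ↦ p (1 - p)` is symmetric about `1/2` and `sigmoid (-t) =
1 - sigmoid t`, so `sigmoid t (1 - sigmoid t)` is even in `t` and decreasing in `|t|`; on
`|θ| ≤ α` the infimum is therefore attained at `θ = α`.
-/

open Real

lemma Real.sigmoid_eq_exp_div (x : ℝ) : sigmoid x = exp x / (1 + exp x) := by
  rw [sigmoid_def, exp_neg]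
  field_simp
  ring

lemma Real.sigmoid_mul_one_sub_sigmoid (x : ℝ) :
    sigmoid x * (1 - sigmoid x) = exp x / (1 + exp x) ^ 2 := by
  have hne : 1 + exp x ≠ 0 := by positivity
  rw [sigmoid_eq_exp_div]
  field_simp
  ring

lemma Real.sigmoid_abs_mul_one_sub_sigmoid_abs (x : ℝ) :
    sigmoid |x| * (1 - sigmoid |x|) = sigmoid x * (1 - sigmoid x) := by
  rcases abs_cases x with ⟨hx, -⟩ | ⟨hx, -⟩
  · rw [hx]
  · rw [hx, sigmoid_neg]
    ring

lemma Real.sigmoid_mul_one_sub_sigmoid_le_of_abs_le {a t : ℝ} (h : |t| ≤ |a|) :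
    sigmoid a * (1 - sigmoid a) ≤ sigmoid t * (1 - sigmoid t) := by
  rw [← sigmoid_abs_mul_one_sub_sigmoid_abs a, ← sigmoid_abs_mul_one_sub_sigmoid_abs t]
  have half_le : 2⁻¹ ≤ sigmoid |t| := sigmoid_zero ▸ sigmoid_le (abs_nonneg t)
  have hle : sigmoid |t| ≤ sigmoid |a| := sigmoid_le h
  nlinarith

lemma Real.hasDerivAt_sigmoid_const_mul (c x : ℝ) :
    HasDerivAt (fun y => sigmoid (c * y)) (c * sigmoid (c * x) * (1 - sigmoid (c * x))) x :=
  ((hasDerivAt_sigmoid (c * x)).comp x (hasDerivAt_const_mul c)).congr_deriv (by ring)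

section LogisticEquation

variable {g : ℝ → ℝ} {c : ℝ}

lemma hasDerivAt_deriv_of_logistic (hg : ∀ x, HasDerivAt g (c * g x * (1 - g x)) x) (x : ℝ) :
    HasDerivAt (deriv g) (c * deriv g x * (1 - 2 * g x)) x := by
  have hdg : deriv g = fun y => c * g y * (1 - g y) := funext fun y => (hg y).deriv
  rw [hdg]
  exact (((hg x).const_mul c).mul ((hg x).const_sub 1)).congr_deriv (by ring)

lemma min_convexity_exprs_of_logistic (hg : ∀ x, HasDerivAt g (c * g x * (1 - g x)) x) {x : ℝ}
    (h0 : g x ≠ 0) (h1 : g x ≠ 1) :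
    min (deriv g x ^ 2 / g x ^ 2 - deriv (deriv g) x / g x)
        (deriv (deriv g) x / (1 - g x) + deriv g x ^ 2 / (1 - g x) ^ 2)
      = c ^ 2 * (g x * (1 - g x)) := by
  have h1' : 1 - g x ≠ 0 := sub_ne_zero.2 h1.symm
  rw [(hasDerivAt_deriv_of_logistic hg x).deriv, (hg x).deriv]
  have left : (c * g x * (1 - g x)) ^ 2 / g x ^ 2 - c * (c * g x * (1 - g x)) * (1 - 2 * g x) / g x
      = c ^ 2 * (g x * (1 - g x)) := by
    field_simp
    ring
  have right : c * (c * g x * (1 - g x)) * (1 - 2 * g x) / (1 - g x)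
      + (c * g x * (1 - g x)) ^ 2 / (1 - g x) ^ 2 = c ^ 2 * (g x * (1 - g x)) := by
    field_simp
    ring
  rw [left, right, min_self]

end LogisticEquation

theorem logistic_link_convexity_constant_general
    (σ α : ℝ) (hα : 0 ≤ α) (f : ℝ → ℝ)
    (hf : ∀ θ, f θ = Real.exp (θ / σ) / (1 + Real.exp (θ / σ))) :
    sInf {x : ℝ | ∃ θ, |θ| ≤ α ∧
        x = min (deriv f θ ^ 2 / f θ ^ 2 - deriv (deriv f) θ / f θ)
          (deriv (deriv f) θ / (1 - f θ) + deriv f θ ^ 2 / (1 - f θ) ^ 2)}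
      = Real.exp (α / σ) / (σ ^ 2 * (1 + Real.exp (α / σ)) ^ 2) := by
  have hf_sigmoid : f = fun θ => sigmoid (σ⁻¹ * θ) :=
    funext fun θ => by rw [hf, sigmoid_eq_exp_div, inv_mul_eq_div]
  have hderiv : ∀ θ, HasDerivAt f (σ⁻¹ * f θ * (1 - f θ)) θ := by
    rw [hf_sigmoid]
    exact hasDerivAt_sigmoid_const_mul σ⁻¹
  have hmin (θ : ℝ) := min_convexity_exprs_of_logistic hderiv (x := θ)
    (hf_sigmoid ▸ (sigmoid_pos _).ne') (hf_sigmoid ▸ (sigmoid_lt_one _).ne)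
  simp only [hmin]
  simp only [hf_sigmoid]
  have hleast : IsLeast {x : ℝ | ∃ θ, |θ| ≤ α ∧
      x = σ⁻¹ ^ 2 * (sigmoid (σ⁻¹ * θ) * (1 - sigmoid (σ⁻¹ * θ)))}
      (σ⁻¹ ^ 2 * (sigmoid (σ⁻¹ * α) * (1 - sigmoid (σ⁻¹ * α)))) := by
    refine ⟨⟨α, (abs_of_nonneg hα).le, rfl⟩, ?_⟩
    rintro _ ⟨θ, hθ, rfl⟩
    have habs : |σ⁻¹ * θ| ≤ |σ⁻¹ * α| := by
      rw [abs_mul, abs_mul, abs_of_nonneg hα]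
      gcongr
    exact mul_le_mul_of_nonneg_left (sigmoid_mul_one_sub_sigmoid_le_of_abs_le habs) (sq_nonneg _)
  rw [hleast.csInf_eq, sigmoid_mul_one_sub_sigmoid, inv_mul_eq_div]
  simp only [div_eq_mul_inv, mul_inv, inv_pow]
  ring

/-- For the logistic link `f(θ) = exp(θ/σ)/(1 + exp(θ/σ))` with scale
`σ > 0` and `α ≥ 0`, the convexity constant
`γ_α = inf_{|θ| ≤ α} min((f′)²/f² − f″/f, f″/(1−f) + (f′)²/(1−f)²)` equals
`f(α)(1 − f(α))/σ² = exp(α/σ)/(σ²(1 + exp(α/σ))²)`. -/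
theorem logistic_link_convexity_constant
    (σ α : ℝ) (hσ : 0 < σ) (hα : 0 ≤ α) (f : ℝ → ℝ)
    (hf : ∀ θ, f θ = Real.exp (θ / σ) / (1 + Real.exp (θ / σ))) :
    sInf {x : ℝ | ∃ θ, |θ| ≤ α ∧
        x = min (deriv f θ ^ 2 / f θ ^ 2 - deriv (deriv f) θ / f θ)
          (deriv (deriv f) θ / (1 - f θ) + deriv f θ ^ 2 / (1 - f θ) ^ 2)}
      = Real.exp (α / σ) / (σ ^ 2 * (1 + Real.exp (α / σ)) ^ 2) :=
  logistic_link_convexity_constant_general σ α hα f hf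
end
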